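/- arXiv:1511.08722 — 2 statements merged into one kernel-verified Lean document; each statement's English description precedes it below -/
import Mathlib

section
/- Let $m\in\mathbb{N}$ and $n\ge 3$. Define $p_{crit}(m,n)$ as the positive root of $\big((m+2)\frac{n}{2}-1\big)p^2+\big((m+2)(1-\frac{n}{2})-3\big)p-(m+2)=0$ and $p_{conf}(m,n)=\frac{(m+2)n+6}{(m+2)n-2}$. Then $p_{crit}(m,n)<p_{conf}(m,n)$. -/
/-!
Write `f(x) = a x² + b x - c` for the defining quadratic and `q` for the conformal exponent.
With `a, c ≥ 0`, the function `f(x) / x = a x + b - c / x` is nondecreasing on `(0, ∞)`,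
so a point `q > 0` with `f(q) > 0` lies strictly to the right of every positive root.
For `S = (m + 2) n` one computes `f(q) = 8 (m + 2) / (S - 2)`, which is positive as `S ≥ 6`.
-/

theorem lt_of_quadratic_eq_zero_of_pos {a b c p q : ℝ} (ha : 0 ≤ a) (hc : 0 ≤ c)
    (hp : 0 < p) (hq : 0 < q) (hfp : a * p ^ 2 + b * p - c = 0)
    (hfq : 0 < a * q ^ 2 + b * q - c) : p < q := by
  by_contra! hqp
  have hcross : p * (a * q ^ 2 + b * q - c) - q * (a * p ^ 2 + b * p - c)
      = (q - p) * (a * p * q + c) := by ring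
  have hnonpos : (q - p) * (a * p * q + c) ≤ 0 :=
    mul_nonpos_of_nonpos_of_nonneg (by linarith) (by nlinarith [mul_nonneg ha hp.le])
  nlinarith [mul_pos hp hfq]

theorem pcrit_quadratic_eval_pconf {A N : ℝ} (h : A * N - 2 ≠ 0) :
    (A * N / 2 - 1) * ((A * N + 6) / (A * N - 2)) ^ 2
        + (A * (1 - N / 2) - 3) * ((A * N + 6) / (A * N - 2)) - A
      = 8 * A / (A * N - 2) := by
  field_simp
  ring

/-- For `m ∈ ℕ` and `n ≥ 3`, the critical exponent (the positive root of its defining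
quadratic) is strictly less than the conformal exponent `((m+2)n+6)/((m+2)n-2)`. -/
theorem pcrit_lt_pconf (m n : ℕ) (hn : 3 ≤ n) (p : ℝ) (hp : 0 < p)
    (hroot : (((m : ℝ) + 2) * (n : ℝ) / 2 - 1) * p ^ 2
        + (((m : ℝ) + 2) * (1 - (n : ℝ) / 2) - 3) * p - ((m : ℝ) + 2) = 0) :
    p < (((m : ℝ) + 2) * (n : ℝ) + 6) / (((m : ℝ) + 2) * (n : ℝ) - 2) := by
  have hA : (2 : ℝ) ≤ (m : ℝ) + 2 := by linarith [(Nat.cast_nonneg m : (0 : ℝ) ≤ m)]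
  have hN : (3 : ℝ) ≤ (n : ℝ) := by exact_mod_cast hn
  have hS : (6 : ℝ) ≤ ((m : ℝ) + 2) * n := by nlinarith
  have hS2 : (0 : ℝ) < ((m : ℝ) + 2) * n - 2 := by linarith
  refine lt_of_quadratic_eq_zero_of_pos (by linarith) (by linarith) hp (by positivity) hroot ?_
  rw [pcrit_quadratic_eval_pconf hS2.ne']
  positivity
end

section
/- For every real $k>1/2$, it holds that $\frac{3k+4}{3k+2}<\frac{k+4+\sqrt{25k^2+48k+32}}{6k+4}<\frac{3k+5+\sqrt{9k^2+42k+33}}{6k+4}$. -/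
/-! The last two fractions share the denominator `6k + 4 = 2(3k + 2)`, so the first inequality
reduces to `√(25k² + 48k + 32) > 5k + 4`, whose square falls short of the radicand by
`8k + 16`. The second reduces to `√(25k² + 48k + 32) < 2k + 1 + √(9k² + 42k + 33)`; squaring, this
is `(2k + 1)(3k - 1) < (2k + 1) √(9k² + 42k + 33)`, and the square of `3k - 1` falls short of that
radicand by `48k + 32`. -/

lemma five_mul_add_four_lt_sqrt {k : ℝ} (hk : -2 < k) :
    5 * k + 4 < Real.sqrt (25 * k ^ 2 + 48 * k + 32) :=
  Real.lt_sqrt_of_sq_lt (by nlinarith)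

lemma three_mul_sub_one_lt_sqrt {k : ℝ} (hk : -2 / 3 < k) :
    3 * k - 1 < Real.sqrt (9 * k ^ 2 + 42 * k + 33) :=
  Real.lt_sqrt_of_sq_lt (by nlinarith)

lemma sqrt_lt_two_mul_add_one_add_sqrt {k : ℝ} (hk : -1 / 2 < k) :
    Real.sqrt (25 * k ^ 2 + 48 * k + 32) < 2 * k + 1 + Real.sqrt (9 * k ^ 2 + 42 * k + 33) := by
  have ht := three_mul_sub_one_lt_sqrt (k := k) (by linarith)
  have ht_sq : Real.sqrt (9 * k ^ 2 + 42 * k + 33) ^ 2 = 9 * k ^ 2 + 42 * k + 33 :=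
    Real.sq_sqrt (by nlinarith)
  rw [Real.sqrt_lt' (by linarith [Real.sqrt_nonneg (9 * k ^ 2 + 42 * k + 33)])]
  nlinarith [mul_lt_mul_of_pos_left ht (show (0 : ℝ) < 2 * k + 1 by linarith)]

/-- For every real `k > 1/2`:
`(3k+4)/(3k+2) < (k+4+√(25k²+48k+32))/(6k+4) < (3k+5+√(9k²+42k+33))/(6k+4)`. -/
theorem pcrit_between (k : ℝ) (hk : 1 / 2 < k) :
    (3 * k + 4) / (3 * k + 2)
      < (k + 4 + Real.sqrt (25 * k ^ 2 + 48 * k + 32)) / (6 * k + 4) ∧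
    (k + 4 + Real.sqrt (25 * k ^ 2 + 48 * k + 32)) / (6 * k + 4)
      < (3 * k + 5 + Real.sqrt (9 * k ^ 2 + 42 * k + 33)) / (6 * k + 4) := by
  have hden : (0 : ℝ) < 6 * k + 4 := by linarith
  constructor
  · calc (3 * k + 4) / (3 * k + 2) = 2 * (3 * k + 4) / (6 * k + 4) := by
          rw [show 6 * k + 4 = 2 * (3 * k + 2) by ring, mul_div_mul_left _ _ two_ne_zero]
      _ < _ := div_lt_div_of_pos_right
          (by linarith [five_mul_add_four_lt_sqrt (k := k) (by linarith)]) hden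
  · exact div_lt_div_of_pos_right
      (by linarith [sqrt_lt_two_mul_add_one_add_sqrt (k := k) (by linarith)]) hden
end
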